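/- Let R be a commutative von Neumann regular ring that is not semi-artinian, σ the least ordinal at which the Loewy series stabilizes, and Q ∈ Spec(R). Then (R/s_σ R) ⊗_R (R/Q) ≅ R/(s_σ R + Q), and this is nonzero if and only if Q ∈ δ^σ Spec(R); hence the support of R/s_σ R, i.e. {Q ∈ Spec(R) : (R/s_σ R) ⊗_R R_Q ≠ 0}, equals the maximal perfect subset δ^σ Spec(R). -/

import Mathlib

open Ordinal

open TensorProduct

/-- The socle of a commutative ring: the sum of all simple ideals. -/
def socleIdeal (A : Type*) [CommRing A] : Ideal A :=
  sSup {I : Ideal A | IsSimpleModule A I}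

/-- The Loewy series of a commutative ring: `loewy A 0 = ⊥`,
`loewy A (α+1)` is the preimage of the socle of `A ⧸ loewy A α`, and
unions are taken at limit ordinals. -/
noncomputable def loewy (A : Type*) [CommRing A] : Ordinal.{0} → Ideal A :=
  fun o => Ordinal.limitRecOn o ⊥
    (fun _ s => Ideal.comap (Ideal.Quotient.mk s) (socleIdeal (A ⧸ s)))
    (fun o _ ih => ⨆ (b : Ordinal) (h : b < o), ih b h)

/-- A ring is semi-artinian if its Loewy series reaches the whole ring. -/
def IsSemiArtinian (A : Type*) [CommRing A] : Prop :=
  ∃ α : Ordinal.{0}, loewy A α = ⊤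

/-- The Cantor–Bendixson derivative of a subset: the set of its
non-isolated points in the subspace topology. -/
def derivSet {X : Type*} [TopologicalSpace X] (s : Set X) : Set X :=
  {x ∈ s | ∀ U : Set X, IsOpen U → x ∈ U → ¬ (U ∩ s ⊆ {x})}

/-- Iterated Cantor–Bendixson derivatives of a topological space. -/
noncomputable def cbDeriv (X : Type*) [TopologicalSpace X] : Ordinal.{0} → Set X :=
  fun o => Ordinal.limitRecOn o Set.univ
    (fun _ s => derivSet s)
    (fun o _ ih => ⋂ (b : Ordinal) (h : b < o), ih b h)

/-!
In a von Neumann regular ring every ideal is radical, so ideals correspond to closed subsets of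
`Spec R`. A simple ideal is principal, `Ra ≅ R/Ann(a)` with `Ann(a)` maximal, and in a regular
ring `Ann(a) = P` exactly when `D(a) = {P}`. Hence the socle of `R/I` cuts out the non-isolated
points of `V(I)`, and transfinite induction gives `V(s_σ R) = δ^σ Spec R` for every `σ`. The
remaining claims are base change: `R/I ⊗ R/Q ≅ R/(I + Q)` is nonzero iff `I ≤ Q` since `Q` is
maximal, and the support of `R/I` is `V(I)`.
-/

open PrimeSpectrum Set Topology

theorem derivSet_range {X Y : Type*} [TopologicalSpace X] [TopologicalSpace Y] {f : Y → X}
    (hf : IsEmbedding f) : derivSet (range f) = f '' {y | ¬ IsOpen {y}} := by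
  ext x
  simp only [derivSet, mem_ofPred_eq, mem_image]
  constructor
  · rintro ⟨⟨y, rfl⟩, hy⟩
    refine ⟨y, fun hopen => ?_, rfl⟩
    obtain ⟨U, hU, hUy⟩ := hf.isInducing.isOpen_iff.mp hopen
    refine hy U hU (by simp [← mem_preimage, hUy]) ?_
    rintro _ ⟨hzU, ⟨z, rfl⟩⟩
    rw [← mem_preimage, hUy] at hzU
    rw [hzU]
    rfl
  · rintro ⟨y, hy, rfl⟩
    refine ⟨mem_range_self y, fun U hU hyU hsub => hy ?_⟩
    have hUy : f ⁻¹' U = {y} :=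
      Subset.antisymm (fun z hz => hf.injective (hsub ⟨hz, mem_range_self z⟩))
        (singleton_subset_iff.mpr hyU)
    exact hUy ▸ hU.preimage hf.continuous

theorem PrimeSpectrum.isOpen_singleton_iff_exists_basicOpen {R : Type*} [CommRing R]
    (P : PrimeSpectrum R) :
    IsOpen {P} ↔ ∃ a : R, (basicOpen a : Set (PrimeSpectrum R)) = {P} := by
  refine ⟨fun h => ?_, fun ⟨a, ha⟩ => ha ▸ (basicOpen a).isOpen⟩
  obtain ⟨_, ⟨a, rfl⟩, hPa, hsub⟩ :=
    isTopologicalBasis_basic_opens.exists_subset_of_mem_open (mem_singleton P) h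
  exact ⟨a, Subset.antisymm hsub (singleton_subset_iff.mpr hPa)⟩

section Socle
variable {R : Type*} [CommRing R]

theorem isAtom_span_singleton_iff_isCoatom_torsionOf (a : R) :
    IsAtom (Ideal.span {a}) ↔ IsCoatom (Ideal.torsionOf R R a) := by
  rw [← isSimpleModule_iff_isAtom, ← isSimpleModule_iff_isCoatom]
  exact ⟨fun _ => IsSimpleModule.congr (Ideal.quotTorsionOfEquivSpanSingleton R R a),
    fun _ => IsSimpleModule.congr (Ideal.quotTorsionOfEquivSpanSingleton R R a).symm⟩

theorem socleIdeal_le_iff (P : Ideal R) :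
    socleIdeal R ≤ P ↔ ∀ a : R, IsAtom (Ideal.span {a}) → a ∈ P := by
  simp only [socleIdeal, sSup_le_iff, mem_ofPred_eq, isSimpleModule_iff_isAtom]
  refine ⟨fun h a ha => h _ ha (Ideal.mem_span_singleton_self a), fun h I hI => ?_⟩
  obtain ⟨a, haI, ha0⟩ := Submodule.exists_mem_ne_zero_of_ne_bot hI.1
  have hspan : Ideal.span {a} = I :=
    (hI.le_iff.mp ((Ideal.span_singleton_le_iff_mem I).mpr haI)).resolve_left (by simpa using ha0)
  rw [← hspan, Ideal.span_singleton_le_iff_mem]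
  exact h a (hspan ▸ hI)

theorem socleIdeal_le_iff_forall_torsionOf_ne [IsReduced R] (P : Ideal R) [hP : P.IsMaximal] :
    socleIdeal R ≤ P ↔ ∀ a : R, Ideal.torsionOf R R a ≠ P := by
  rw [socleIdeal_le_iff]
  refine ⟨fun h a ha => ?_, fun h a ha => ?_⟩
  · have haP : a ∈ P := h a ((isAtom_span_singleton_iff_isCoatom_torsionOf a).mpr (ha ▸ hP.out))
    rw [← ha, Ideal.mem_torsionOf_iff, _root_.smul_eq_mul, ← sq] at haP
    rw [(pow_eq_zero_iff two_ne_zero).mp haP, Ideal.torsionOf_zero] at ha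
    exact hP.ne_top ha.symm
  · by_contra haP
    have hle : Ideal.torsionOf R R a ≤ P := fun b hb => by
      refine (hP.isPrime.mem_or_mem ?_).resolve_right haP
      rw [← _root_.smul_eq_mul, (Ideal.mem_torsionOf_iff _ _).mp hb]
      exact P.zero_mem
    have hcoatom := (isAtom_span_singleton_iff_isCoatom_torsionOf a).mp ha
    exact h a ((hcoatom.le_iff_eq hP.ne_top).mp hle).symm

end Socle

def IsVonNeumannRegular (A : Type*) [CommRing A] : Prop :=
  ∀ a : A, ∃ x, a * x * a = a

namespace IsVonNeumannRegular
variable {A : Type*} [CommRing A]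

theorem quotient (hA : IsVonNeumannRegular A) (I : Ideal A) : IsVonNeumannRegular (A ⧸ I) := by
  intro a
  obtain ⟨r, rfl⟩ := Ideal.Quotient.mk_surjective a
  obtain ⟨x, hx⟩ := hA r
  exact ⟨Ideal.Quotient.mk I x, by rw [← map_mul, ← map_mul, hx]⟩

theorem isRadical (hA : IsVonNeumannRegular A) (I : Ideal A) : I.IsRadical := by
  refine (Ideal.isRadical_iff_pow_one_lt 2 one_lt_two).mpr fun a ha => ?_
  obtain ⟨x, hx⟩ := hA a
  rw [← hx, mul_right_comm, ← sq]
  exact I.mul_mem_right x ha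

theorem isReduced (hA : IsVonNeumannRegular A) : IsReduced A := by
  refine (isReduced_iff_pow_one_lt 2 one_lt_two).mpr fun a ha => ?_
  obtain ⟨x, hx⟩ := hA a
  rw [← hx, mul_right_comm, ← sq, ha, zero_mul]

theorem isMaximal_of_isPrime (hA : IsVonNeumannRegular A) {P : Ideal A} (hP : P.IsPrime) :
    P.IsMaximal := by
  refine Ideal.isMaximal_iff.mpr ⟨(Ideal.ne_top_iff_one P).mp hP.ne_top, fun J a hPJ ha haJ => ?_⟩
  obtain ⟨x, hx⟩ := hA a
  have hmul : a * (x * a - 1) ∈ P := by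
    rw [show a * (x * a - 1) = 0 by linear_combination hx]
    exact P.zero_mem
  have hxa : x * a - 1 ∈ J := hPJ ((hP.mem_or_mem hmul).resolve_left ha)
  simpa using J.sub_mem (J.mul_mem_left x haJ) hxa

theorem zeroLocus_torsionOf (hA : IsVonNeumannRegular A) (a : A) :
    zeroLocus (Ideal.torsionOf A A a : Set A) = basicOpen a := by
  ext P
  simp only [mem_zeroLocus, SetLike.coe_subset_coe, SetLike.mem_coe, mem_basicOpen]
  obtain ⟨x, hx⟩ := hA a
  refine ⟨fun h haP => ?_, fun haP b hb => ?_⟩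
  · have h1 : 1 - x * a ∈ P.asIdeal :=
      h <| (Ideal.mem_torsionOf_iff _ _).mpr (by rw [_root_.smul_eq_mul]; linear_combination -hx)
    exact P.isPrime.ne_top <| (Ideal.eq_top_iff_one _).mpr <| by
      simpa using P.asIdeal.add_mem h1 (P.asIdeal.mul_mem_left x haP)
  · refine (P.isPrime.mem_or_mem ?_).resolve_right haP
    rw [← _root_.smul_eq_mul, (Ideal.mem_torsionOf_iff _ _).mp hb]
    exact P.asIdeal.zero_mem

theorem torsionOf_eq_iff_basicOpen_eq_singleton (hA : IsVonNeumannRegular A) (a : A)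
    (P : PrimeSpectrum A) :
    Ideal.torsionOf A A a = P.asIdeal ↔ (basicOpen a : Set (PrimeSpectrum A)) = {P} := by
  have hP : IsClosed {P} :=
    (isClosed_singleton_iff_isMaximal P).mpr (hA.isMaximal_of_isPrime P.isPrime)
  rw [← hA.zeroLocus_torsionOf, ← hP.closure_eq, PrimeSpectrum.closure_singleton,
    zeroLocus_eq_iff, (hA.isRadical _).radical, (hA.isRadical _).radical]

theorem zeroLocus_socleIdeal (hA : IsVonNeumannRegular A) :
    zeroLocus (socleIdeal A : Set A) = {P | ¬ IsOpen {P}} := by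
  have := hA.isReduced
  ext P
  have := hA.isMaximal_of_isPrime P.isPrime
  rw [mem_zeroLocus, SetLike.coe_subset_coe, socleIdeal_le_iff_forall_torsionOf_ne,
    mem_ofPred_eq, isOpen_singleton_iff_exists_basicOpen, not_exists]
  exact forall_congr' fun a => (hA.torsionOf_eq_iff_basicOpen_eq_singleton a P).not

theorem derivSet_zeroLocus (hA : IsVonNeumannRegular A) (I : Ideal A) :
    derivSet (zeroLocus (I : Set A)) =
      zeroLocus (Ideal.comap (Ideal.Quotient.mk I) (socleIdeal (A ⧸ I)) : Set A) := by
  have hmk := Ideal.Quotient.mk_surjective (I := I)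
  rw [← image_comap_zeroLocus_eq_zeroLocus_comap _ _ hmk, (hA.quotient I).zeroLocus_socleIdeal,
    ← derivSet_range (isEmbedding_comap_of_surjective _ _ hmk), range_comap_of_surjective _ _ hmk,
    Ideal.mk_ker]

end IsVonNeumannRegular

section Recursion
variable (A : Type*) [CommRing A] (X : Type*) [TopologicalSpace X]

theorem loewy_zero : loewy A 0 = ⊥ := by
  simp only [loewy, limitRecOn_zero]

theorem loewy_add_one (o : Ordinal.{0}) :
    loewy A (o + 1) =
      Ideal.comap (Ideal.Quotient.mk (loewy A o)) (socleIdeal (A ⧸ loewy A o)) := by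
  simp only [loewy, limitRecOn_add_one]
  rfl

theorem loewy_of_isSuccLimit {o : Ordinal.{0}} (ho : Order.IsSuccLimit o) :
    loewy A o = ⨆ (b : Ordinal) (_ : b < o), loewy A b := by
  simp only [loewy, limitRecOn_limit _ _ _ _ ho]

theorem cbDeriv_zero : cbDeriv X 0 = Set.univ := by
  simp only [cbDeriv, limitRecOn_zero]

theorem cbDeriv_add_one (o : Ordinal.{0}) : cbDeriv X (o + 1) = derivSet (cbDeriv X o) := by
  simp only [cbDeriv, limitRecOn_add_one]

theorem cbDeriv_of_isSuccLimit {o : Ordinal.{0}} (ho : Order.IsSuccLimit o) :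
    cbDeriv X o = ⋂ (b : Ordinal) (_ : b < o), cbDeriv X b := by
  simp only [cbDeriv, limitRecOn_limit _ _ _ _ ho]

end Recursion

theorem IsVonNeumannRegular.cbDeriv_eq_zeroLocus_loewy {A : Type*} [CommRing A]
    (hA : IsVonNeumannRegular A) (σ : Ordinal.{0}) :
    cbDeriv (PrimeSpectrum A) σ = zeroLocus (loewy A σ : Set A) := by
  induction σ using Ordinal.limitRecOn with
  | zero => rw [cbDeriv_zero, loewy_zero, zeroLocus_bot]
  | add_one β ih => rw [cbDeriv_add_one, loewy_add_one, ih, hA.derivSet_zeroLocus]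
  | limit o ho ih =>
    simp only [cbDeriv_of_isSuccLimit _ ho, loewy_of_isSuccLimit _ ho, zeroLocus_iSup]
    exact iInter₂_congr ih

section BaseChange
variable {R : Type*} [CommRing R]

noncomputable def quotientTensorQuotientAlgEquiv (I J : Ideal R) :
    (R ⧸ I) ⊗[R] (R ⧸ J) ≃ₐ[R] R ⧸ (I ⊔ J) :=
  ((Algebra.TensorProduct.quotIdealMapEquivQuotTensor (R ⧸ J) I).restrictScalars R).symm.trans
    ((DoubleQuot.quotQuotEquivQuotSupₐ R J I).trans (Ideal.quotientEquivAlgOfEq R (sup_comm J I)))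

theorem nontrivial_quotient_sup_iff_le {I P : Ideal R} [hP : P.IsMaximal] :
    Nontrivial (R ⧸ (I ⊔ P)) ↔ I ≤ P := by
  rw [Ideal.Quotient.nontrivial_iff, ← hP.out.not_codisjoint_iff_le, codisjoint_iff, sup_comm]

theorem nontrivial_quotient_tensor_localization_iff (I : Ideal R) (p : PrimeSpectrum R) :
    Nontrivial ((R ⧸ I) ⊗[R] Localization.AtPrime p.asIdeal) ↔ I ≤ p.asIdeal := by
  rw [← (TensorProduct.comm R _ _).toEquiv.nontrivial_congr,
    ← (LocalizedModule.equivTensorProduct p.asIdeal.primeCompl (R ⧸ I)).toEquiv.nontrivial_congr,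
    ← Module.mem_support_iff, Module.mem_support_iff_of_finite, Ideal.annihilator_quotient]

end BaseChange

theorem stmt19_general (R : Type*) [CommRing R] (hR : ∀ a : R, ∃ x, a * x * a = a)
    (σ : Ordinal.{0})
    (Q : PrimeSpectrum R) :
    Nonempty ((R ⧸ loewy R σ) ⊗[R] (R ⧸ Q.asIdeal) ≃ₐ[R]
      R ⧸ (loewy R σ ⊔ Q.asIdeal)) ∧
    (Nontrivial ((R ⧸ loewy R σ) ⊗[R] (R ⧸ Q.asIdeal)) ↔
      Q ∈ cbDeriv (PrimeSpectrum R) σ) ∧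
    {Q' : PrimeSpectrum R |
        Nontrivial ((R ⧸ loewy R σ) ⊗[R] Localization.AtPrime Q'.asIdeal)} =
      cbDeriv (PrimeSpectrum R) σ := by
  have : Q.asIdeal.IsMaximal := IsVonNeumannRegular.isMaximal_of_isPrime hR Q.isPrime
  simp_rw [IsVonNeumannRegular.cbDeriv_eq_zeroLocus_loewy hR σ, Set.ext_iff, mem_zeroLocus,
    SetLike.coe_subset_coe]
  refine ⟨⟨quotientTensorQuotientAlgEquiv _ _⟩, ?_, nontrivial_quotient_tensor_localization_iff _⟩
  rw [(quotientTensorQuotientAlgEquiv (loewy R σ) Q.asIdeal).toEquiv.nontrivial_congr,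
    nontrivial_quotient_sup_iff_le]

/-- `(R/s_σ R) ⊗_R (R/Q) ≅ R/(s_σ R + Q)`, which is nonzero iff
`Q ∈ δ^σ Spec R`; hence the support of `R/s_σ R` equals the maximal perfect
subset `δ^σ Spec R`. -/
theorem stmt19 (R : Type*) [CommRing R] (hR : ∀ a : R, ∃ x, a * x * a = a)
    (hns : ¬ IsSemiArtinian R) (σ : Ordinal.{0})
    (hστ : loewy R σ = loewy R (σ + 1))
    (hmin : ∀ β < σ, loewy R β ≠ loewy R (β + 1))
    (Q : PrimeSpectrum R) :
    Nonempty ((R ⧸ loewy R σ) ⊗[R] (R ⧸ Q.asIdeal) ≃ₐ[R]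
      R ⧸ (loewy R σ ⊔ Q.asIdeal)) ∧
    (Nontrivial ((R ⧸ loewy R σ) ⊗[R] (R ⧸ Q.asIdeal)) ↔
      Q ∈ cbDeriv (PrimeSpectrum R) σ) ∧
    {Q' : PrimeSpectrum R |
        Nontrivial ((R ⧸ loewy R σ) ⊗[R] Localization.AtPrime Q'.asIdeal)} =
      cbDeriv (PrimeSpectrum R) σ :=
  stmt19_general R hR σ Q
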